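/- arXiv:1905.06895 — 4 statements merged into one kernel-verified Lean document; each statement's English description precedes it below -/
import Mathlib

section
/- Let G = (V, E) be an Eulerian simple graph with two vertices u and v such that the degree of v in G is strictly larger than the degree of u in G. Then there exist two distinct vertices a and b, both adjacent to v, neither adjacent to u, and both different from u, such that the graph G' obtained from G by removing the edges av and bv and adding the edges au and bu is Eulerian; in particular, G' is connected, the degree of u increases by 2, the degree of v decreases by 2, and all other degrees are unchanged. -/
/-!
Let `P` be the set of neighbours of `v` that are neither `u` nor adjacent to `u`. All degrees
are even, so `deg v ≥ deg u + 2` and hence `|P| ≥ 2`. For `a, b ∈ P`, replacing `av, bv` by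
`au, bu` preserves every degree parity, and the new graph is connected as soon as `u` still
reaches `v` in `G - av - bv`. Suppose this fails for some pair. The component of `u` in
`G - av - bv` avoids `v`; it cannot avoid both `a` and `b` (it would then be a component of `G`),
and since `a` and `b` are the only odd vertices of `G - av - bv`, the handshake lemma in that
component forces it to contain both. As `deg v ≥ 3`, `v` has a third neighbour `c`; it is in `P`,
for otherwise it would join the component of `u` to `v`, and `u` reaches `b`, hence `v`, in
`G - av - cv`.
-/

open SimpleGraph Finset
open scoped Classical

/-- A simple graph is Eulerian if it is connected and every vertex has even degree. -/
def IsEulerianGraph {V : Type*} [Fintype V] (G : SimpleGraph V) : Prop :=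
  G.Connected ∧ ∀ v : V, Even (G.degree v)

namespace SimpleGraph

variable {V : Type*} {G : SimpleGraph V}

theorem Reachable.of_forall_adj_reachable {G' : SimpleGraph V}
    (h : ∀ x y, G.Adj x y → G'.Reachable x y) {x y : V} (hxy : G.Reachable x y) :
    G'.Reachable x y := by
  rw [reachable_iff_reflTransGen] at hxy
  induction hxy with
  | refl => rfl
  | tail _ hyz ih => exact ih.trans (h _ _ hyz)

theorem Connected.of_forall_adj_reachable {G' : SimpleGraph V} (hG : G.Connected)
    (h : ∀ x y, G.Adj x y → G'.Reachable x y) : G'.Connected :=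
  have := hG.nonempty
  ⟨fun x y => (hG x y).of_forall_adj_reachable h⟩

theorem Reachable.of_adj_imp_adj {H : SimpleGraph V} {u x : V}
    (h : ∀ y z, H.Reachable u y → G.Adj y z → H.Adj y z) (hx : G.Reachable u x) :
    H.Reachable u x := by
  rw [reachable_iff_reflTransGen] at hx
  induction hx with
  | refl => rfl
  | tail _ hyz ih => exact ih.trans (h _ _ ih hyz).reachable

theorem reachable_deleteEdges_pair_or_of_not_reachable {a b u v : V} (huv : G.Reachable u v)
    (h : ¬ (G.deleteEdges {s(a, v), s(b, v)}).Reachable u v) :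
    (G.deleteEdges {s(a, v), s(b, v)}).Reachable u a ∨
      (G.deleteEdges {s(a, v), s(b, v)}).Reachable u b := by
  by_contra! hab
  refine h (huv.of_adj_imp_adj fun y z hy hyz => ?_)
  have hya : y ≠ a := by rintro rfl; exact hab.1 hy
  have hyb : y ≠ b := by rintro rfl; exact hab.2 hy
  have hyv : y ≠ v := by rintro rfl; exact h hy
  simp [hyz, hya, hyb, hyv]

theorem reachable_deleteEdges_pair_replace {a b c u v : V} (hab : a ≠ b) (hcb : c ≠ b)
    (hbv : G.Adj b v) (hb : (G.deleteEdges {s(a, v), s(b, v)}).Reachable u b)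
    (hv : ¬ (G.deleteEdges {s(a, v), s(b, v)}).Reachable u v) :
    (G.deleteEdges {s(a, v), s(c, v)}).Reachable u v := by
  obtain ⟨p⟩ := hb
  have hvp : v ∉ p.support := fun hvp => hv ⟨p.takeUntil v hvp⟩
  have hp : ∀ e ∈ p.edges, e ∈ (G.deleteEdges {s(a, v), s(c, v)}).edgeSet := by
    intro e he
    have heH := p.edges_subset_edgeSet he
    induction e using Sym2.ind with
    | _ x y =>
    have hxv : x ≠ v := by rintro rfl; exact hvp (p.fst_mem_support_of_mem_edges he)
    have hyv : y ≠ v := by rintro rfl; exact hvp (p.snd_mem_support_of_mem_edges he)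
    simp_all
  have hbv' : (G.deleteEdges {s(a, v), s(c, v)}).Adj b v := by
    simp [hbv, hab.symm, hcb.symm, hbv.ne]
  exact ⟨(p.transfer _ hp).concat hbv'⟩

theorem reachable_deleteEdges_pair_of_adj {a b u v w : V} (hua : u ≠ a) (hub : u ≠ b)
    (huv : u ≠ v) (hvw : G.Adj v w) (hwa : w ≠ a) (hwb : w ≠ b) (huw : w = u ∨ G.Adj u w) :
    (G.deleteEdges {s(a, v), s(b, v)}).Reachable u v := by
  have hwv : (G.deleteEdges {s(a, v), s(b, v)}).Adj w v := by
    simp [hvw.symm, hwa, hwb, hvw.ne']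
  rcases huw with rfl | huw
  · exact hwv.reachable
  · have huw' : (G.deleteEdges {s(a, v), s(b, v)}).Adj u w := by
      simp [huw, hua, hub, huv]
    exact huw'.reachable.trans hwv.reachable

-- The two sides may be computed with different `Fintype` instances.
theorem degree_congr {G₁ G₂ : SimpleGraph V} (h : G₁ = G₂) (w : V)
    [Fintype (G₁.neighborSet w)] [Fintype (G₂.neighborSet w)] :
    G₁.degree w = G₂.degree w := by
  subst h
  convert rfl

theorem card_filter_mem_image_mk (B : Finset V) (x w : V) :
    #{e ∈ B.image (s(·, x)) | w ∈ e} = #{y ∈ B | w = y ∨ w = x} := by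
  rw [filter_image, card_image_of_injective _ fun _ _ h => Sym2.congr_left.mp h]
  simp only [Sym2.mem_iff]

variable [Fintype V]

theorem exists_ne_reachable_odd_degree [DecidableRel G.Adj] {x : V} (hx : Odd (G.degree x)) :
    ∃ y, y ≠ x ∧ G.Reachable x y ∧ Odd (G.degree y) := by
  let K : SimpleGraph V :=
    { Adj := fun y z => G.Adj y z ∧ G.Reachable x y
      symm := ⟨fun y z h => ⟨h.1.symm, h.2.trans h.1.reachable⟩⟩ }
  have hK : ∀ y, K.degree y = if G.Reachable x y then G.degree y else 0 := by
    intro y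
    rw [← card_neighborFinset_eq_degree]
    split_ifs with hy
    · rw [← card_neighborFinset_eq_degree]; congr 1; ext z; simp [K, hy]
    · rw [card_eq_zero]; ext z; simp [K, hy]
  obtain ⟨y, hyx, hy⟩ := K.exists_ne_odd_degree_of_exists_odd_degree x (by simpa [hK] using hx)
  by_cases hxy : G.Reachable x y
  · exact ⟨y, hyx, hxy, by simpa [hK, hxy] using hy⟩
  · simp [hK, hxy] at hy

theorem degree_add_card_filter_mem_of_edgeFinset_eq {G' : SimpleGraph V}
    {D A : Finset (Sym2 V)} (hE : G'.edgeFinset = (G.edgeFinset \ D) ∪ A)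
    (hD : D ⊆ G.edgeFinset) (hA : Disjoint G.edgeFinset A) (w : V) :
    G'.degree w + #{e ∈ D | w ∈ e} = G.degree w + #{e ∈ A | w ∈ e} := by
  simp only [← card_incidenceFinset_eq_degree, incidenceFinset_eq_filter, hE, filter_union]
  have hsdiff : {e ∈ G.edgeFinset \ D | w ∈ e} =
      {e ∈ G.edgeFinset | w ∈ e} \ {e ∈ D | w ∈ e} := by
    ext; simp only [mem_filter, mem_sdiff]; tauto
  have hdisj : Disjoint {e ∈ G.edgeFinset \ D | w ∈ e} {e ∈ A | w ∈ e} :=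
    disjoint_filter_filter (hA.mono_left sdiff_subset)
  rw [card_union_of_disjoint hdisj, add_right_comm, hsdiff,
    card_sdiff_add_card_eq_card (filter_subset_filter _ hD)]

theorem degree_deleteEdges_image_add {B : Finset V} {v : V} (hB : ∀ x ∈ B, G.Adj v x) (w : V) :
    (G.deleteEdges ↑(B.image (s(·, v)))).degree w + #{y ∈ B | w = y ∨ w = v} =
      G.degree w := by
  rw [← card_filter_mem_image_mk]
  have hD : B.image (s(·, v)) ⊆ G.edgeFinset := by
    intro e he
    obtain ⟨x, hx, rfl⟩ := mem_image.mp he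
    simpa using (hB x hx).symm
  have h := degree_add_card_filter_mem_of_edgeFinset_eq
    (G' := G.deleteEdges ↑(B.image (s(·, v)))) (A := ∅) (by simp) hD (disjoint_empty_right _) w
  rw [filter_empty, card_empty, add_zero] at h
  convert h using 3

theorem reachable_deleteEdges_pair_of_not_reachable (hG : ∀ w, Even (G.degree w)) {a b v : V}
    (hab : a ≠ b) (ha : G.Adj v a) (hb : G.Adj v b)
    (h : ¬ (G.deleteEdges {s(a, v), s(b, v)}).Reachable a v) :
    (G.deleteEdges {s(a, v), s(b, v)}).Reachable a b := by
  have hdeg : ∀ w, (G.deleteEdges {s(a, v), s(b, v)}).degree w +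
      #{y ∈ ({a, b} : Finset V) | w = y ∨ w = v} = G.degree w := by
    intro w
    convert degree_deleteEdges_image_add (B := {a, b}) (v := v) (G := G)
      (by simp only [mem_insert, mem_singleton]; rintro x (rfl | rfl) <;> assumption) w using 4
    rw [image_insert, image_singleton, coe_insert, coe_singleton]
  have hodd : Odd ((G.deleteEdges {s(a, v), s(b, v)}).degree a) := by
    have ha' := hdeg a
    simp only [ha.ne', or_false, filter_eq, mem_insert, mem_singleton, true_or, if_true,
      card_singleton] at ha'
    obtain ⟨k, hk⟩ := hG a
    exact ⟨k - 1, by omega⟩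
  obtain ⟨y, hya, hay, hy⟩ := exists_ne_reachable_odd_degree hodd
  have hyv : y ≠ v := fun hyv => h (hyv ▸ hay)
  by_contra hab'
  have hyb : y ≠ b := fun hyb => hab' (hyb ▸ hay)
  have hyG := hdeg y
  simp only [hya, hyb, hyv, or_false, filter_eq, mem_insert, mem_singleton, if_false,
    card_empty, add_zero] at hyG
  rw [hyG] at hy
  exact Nat.not_odd_iff_even.mpr (hG y) hy

variable (G) in
noncomputable def privateNeighborFinset (v u : V) : Finset V :=
  G.neighborFinset v \ insert u (G.neighborFinset u)

theorem mem_privateNeighborFinset {v u x : V} :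
    x ∈ G.privateNeighborFinset v u ↔ G.Adj v x ∧ x ≠ u ∧ ¬ G.Adj u x := by
  simp [privateNeighborFinset, not_or]

theorem degree_le_degree_add_card_privateNeighborFinset (u v : V) :
    G.degree v ≤ G.degree u + #(G.privateNeighborFinset v u) := by
  have hcommon : #(G.neighborFinset v ∩ insert u (G.neighborFinset u)) ≤ G.degree u := by
    by_cases huv : G.Adj u v
    · calc #(G.neighborFinset v ∩ insert u (G.neighborFinset u))
          ≤ #((insert u (G.neighborFinset u)).erase v) := by
            refine card_le_card fun x hx => ?_
            simp only [mem_inter, mem_neighborFinset] at hx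
            exact mem_erase.mpr ⟨hx.1.ne', hx.2⟩
        _ ≤ G.degree u := by
            rw [card_erase_of_mem (mem_insert_of_mem (by simpa using huv))]
            simp
    · refine card_le_card fun x hx => ?_
      simp only [mem_inter, mem_neighborFinset, mem_insert] at hx ⊢
      obtain ⟨hvx, rfl | hux⟩ := hx
      · exact absurd hvx.symm huv
      · exact hux
  rw [← card_neighborFinset_eq_degree,
    ← card_inter_add_card_sdiff _ (insert u (G.neighborFinset u))]
  exact Nat.add_le_add_right hcommon _

theorem exists_pair_privateNeighborFinset_reachable_deleteEdges (hG : ∀ w, Even (G.degree w))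
    {u v : V} (huv : G.Reachable u v) (hdeg : G.degree u < G.degree v) :
    ∃ a ∈ G.privateNeighborFinset v u, ∃ b ∈ G.privateNeighborFinset v u,
      a ≠ b ∧ (G.deleteEdges {s(a, v), s(b, v)}).Reachable u v := by
  have hne : u ≠ v := by rintro rfl; exact lt_irrefl _ hdeg
  have hu := huv.degree_pos_left hne
  have hdeg2 : G.degree u + 2 ≤ G.degree v := by
    obtain ⟨m, hm⟩ := hG u
    obtain ⟨n, hn⟩ := hG v
    omega
  have hP := G.degree_le_degree_add_card_privateNeighborFinset u v
  obtain ⟨a, ha, b, hb, hab⟩ := one_lt_card.mp (by omega : 1 < #(G.privateNeighborFinset v u))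
  by_cases hH : (G.deleteEdges {s(a, v), s(b, v)}).Reachable u v
  · exact ⟨a, ha, b, hb, hab, hH⟩
  obtain ⟨hva, hau, -⟩ := mem_privateNeighborFinset.mp ha
  obtain ⟨hvb, hbu, -⟩ := mem_privateNeighborFinset.mp hb
  have hub : (G.deleteEdges {s(a, v), s(b, v)}).Reachable u b := by
    rcases reachable_deleteEdges_pair_or_of_not_reachable huv hH with hua | hub
    · exact hua.trans (reachable_deleteEdges_pair_of_not_reachable hG hab hva hvb
        fun hav => hH (hua.trans hav))
    · exact hub
  obtain ⟨w, hvw, hwab⟩ : ∃ w ∈ G.neighborFinset v, w ∉ ({a, b} : Finset V) :=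
    exists_mem_notMem_of_card_lt_card (by rw [card_pair hab, card_neighborFinset_eq_degree]; omega)
  rw [mem_neighborFinset] at hvw
  simp only [mem_insert, mem_singleton, not_or] at hwab
  by_cases hw : w ∈ G.privateNeighborFinset v u
  · exact ⟨a, ha, w, hw, Ne.symm hwab.1,
      reachable_deleteEdges_pair_replace hab hwab.2 hvb.symm hub hH⟩
  · have huw : w = u ∨ G.Adj u w := by
      simp only [mem_privateNeighborFinset, hvw, true_and, not_and_or, not_not] at hw
      exact hw
    exact absurd (reachable_deleteEdges_pair_of_adj hau.symm hbu.symm hne hvw hwab.1 hwab.2 huw) hH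

variable (G) in
noncomputable def moveNeighbors (B : Finset V) (v u : V) : SimpleGraph V :=
  fromEdgeSet ((G.edgeSet \ ↑(B.image (s(·, v)))) ∪ ↑(B.image (s(·, u))))

theorem edgeFinset_moveNeighbors {B : Finset V} {u v : V}
    (hB : B ⊆ G.privateNeighborFinset v u) :
    (G.moveNeighbors B v u).edgeFinset =
      (G.edgeFinset \ B.image (s(·, v))) ∪ B.image (s(·, u)) := by
  ext e
  rw [mem_edgeFinset, moveNeighbors, edgeSet_fromEdgeSet, mem_union, mem_sdiff, mem_edgeFinset]
  simp only [Set.mem_sdiff, Set.mem_union, mem_coe, Sym2.mem_diagSet]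
  refine ⟨fun h => h.1, fun h => ⟨h, ?_⟩⟩
  rcases h with ⟨he, -⟩ | he
  · exact G.not_isDiag_of_mem_edgeSet he
  · obtain ⟨x, hx, rfl⟩ := mem_image.mp he
    simpa using (mem_privateNeighborFinset.mp (hB hx)).2.1

theorem degree_moveNeighbors_add {B : Finset V} {u v : V}
    (hB : B ⊆ G.privateNeighborFinset v u) (w : V) :
    (G.moveNeighbors B v u).degree w + #{y ∈ B | w = y ∨ w = v} =
      G.degree w + #{y ∈ B | w = y ∨ w = u} := by
  rw [← card_filter_mem_image_mk, ← card_filter_mem_image_mk]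
  refine degree_add_card_filter_mem_of_edgeFinset_eq (edgeFinset_moveNeighbors hB) ?_ ?_ w
  · intro e he
    obtain ⟨x, hx, rfl⟩ := mem_image.mp he
    simpa using (mem_privateNeighborFinset.mp (hB hx)).1.symm
  · refine Finset.disjoint_left.mpr fun e he he' => ?_
    obtain ⟨x, hx, rfl⟩ := mem_image.mp he'
    exact (mem_privateNeighborFinset.mp (hB hx)).2.2 (G.mem_edgeFinset.mp he).symm

theorem degree_moveNeighbors_target {B : Finset V} {u v : V}
    (hB : B ⊆ G.privateNeighborFinset v u) :
    (G.moveNeighbors B v u).degree u = G.degree u + #B := by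
  have h := degree_moveNeighbors_add hB u
  rwa [filter_true_of_mem fun _ _ => Or.inr rfl, filter_false_of_mem, card_empty, add_zero] at h
  intro y hy
  obtain ⟨hvy, hyu, huy⟩ := mem_privateNeighborFinset.mp (hB hy)
  rintro (rfl | rfl)
  exacts [hyu rfl, huy hvy]

theorem degree_moveNeighbors_source {B : Finset V} {u v : V}
    (hB : B ⊆ G.privateNeighborFinset v u) :
    (G.moveNeighbors B v u).degree v + #B = G.degree v := by
  have h := degree_moveNeighbors_add hB v
  rwa [filter_true_of_mem fun _ _ => Or.inr rfl, filter_false_of_mem, card_empty, add_zero] at h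
  intro y hy
  obtain ⟨hvy, hyu, huy⟩ := mem_privateNeighborFinset.mp (hB hy)
  rintro (rfl | rfl)
  exacts [hvy.ne rfl, huy hvy]

theorem degree_moveNeighbors_of_ne {B : Finset V} {u v w : V}
    (hB : B ⊆ G.privateNeighborFinset v u) (hwu : w ≠ u) (hwv : w ≠ v) :
    (G.moveNeighbors B v u).degree w = G.degree w := by
  simpa [hwu, hwv] using degree_moveNeighbors_add hB w

theorem even_degree_moveNeighbors {B : Finset V} {u v : V}
    (hB : B ⊆ G.privateNeighborFinset v u) (hG : ∀ w, Even (G.degree w)) (hB2 : Even #B)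
    (w : V) :
    Even ((G.moveNeighbors B v u).degree w) := by
  by_cases hwu : w = u
  · subst hwu
    rw [degree_moveNeighbors_target hB]
    exact (hG w).add hB2
  by_cases hwv : w = v
  · subst hwv
    have h := degree_moveNeighbors_source hB
    exact (Nat.even_add.mp (h ▸ hG w)).mpr hB2
  rw [degree_moveNeighbors_of_ne hB hwu hwv]
  exact hG w

theorem connected_moveNeighbors {B : Finset V} {u v : V}
    (hB : B ⊆ G.privateNeighborFinset v u) (hG : G.Connected)
    (huv : (G.deleteEdges ↑(B.image (s(·, v)))).Reachable u v) :
    (G.moveNeighbors B v u).Connected := by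
  have hle : G.deleteEdges ↑(B.image (s(·, v))) ≤ G.moveNeighbors B v u := by
    intro x y h
    rw [deleteEdges_adj] at h
    rw [moveNeighbors, fromEdgeSet_adj]
    exact ⟨Or.inl ⟨h.1, h.2⟩, h.1.ne⟩
  have hBv : ∀ z ∈ B, (G.moveNeighbors B v u).Reachable z v := by
    intro z hz
    have hzu : (G.moveNeighbors B v u).Adj z u := by
      rw [moveNeighbors, fromEdgeSet_adj]
      exact ⟨Or.inr (mem_image_of_mem _ hz), (mem_privateNeighborFinset.mp (hB hz)).2.1⟩
    exact hzu.reachable.trans (huv.mono hle)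
  refine hG.of_forall_adj_reachable fun x y hxy => ?_
  by_cases hD : s(x, y) ∈ B.image (s(·, v))
  · obtain ⟨z, hz, hzxy⟩ := mem_image.mp hD
    rcases Sym2.eq_iff.mp hzxy with ⟨rfl, rfl⟩ | ⟨rfl, rfl⟩
    exacts [hBv _ hz, (hBv _ hz).symm]
  · exact (hle (by rw [deleteEdges_adj]; exact ⟨hxy, hD⟩)).reachable

end SimpleGraph

theorem eulerian_increasing_switch {V : Type*} [Fintype V]
    (G : SimpleGraph V) (hG : IsEulerianGraph G) (u v : V)
    (hdeg : G.degree u < G.degree v) :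
    ∃ a b : V, a ≠ b ∧
      G.Adj v a ∧ G.Adj v b ∧ ¬ G.Adj u a ∧ ¬ G.Adj u b ∧ a ≠ u ∧ b ≠ u ∧
      (let G' : SimpleGraph V :=
        SimpleGraph.fromEdgeSet
          ((G.edgeSet \ {s(a, v), s(b, v)}) ∪ {s(a, u), s(b, u)});
       IsEulerianGraph G' ∧ G'.Connected ∧
       G'.degree u = G.degree u + 2 ∧
       G'.degree v + 2 = G.degree v ∧
       ∀ w : V, w ≠ u → w ≠ v → G'.degree w = G.degree w) := by
  obtain ⟨hconn, heven⟩ := hG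
  obtain ⟨a, ha, b, hb, hab, hreach⟩ :=
    exists_pair_privateNeighborFinset_reachable_deleteEdges heven (hconn u v) hdeg
  have hB : {a, b} ⊆ G.privateNeighborFinset v u := insert_subset ha (singleton_subset_iff.mpr hb)
  have hcard : #({a, b} : Finset V) = 2 := card_pair hab
  obtain ⟨hva, hau, hua⟩ := mem_privateNeighborFinset.mp ha
  obtain ⟨hvb, hbu, hub⟩ := mem_privateNeighborFinset.mp hb
  refine ⟨a, b, hab, hva, hvb, hua, hub, hau, hbu, ?_⟩
  intro G'
  have hG' : G' = G.moveNeighbors {a, b} v u := by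
    simp only [G', moveNeighbors, image_insert, image_singleton, coe_insert, coe_singleton]
  have hconn' : G'.Connected := hG' ▸ connected_moveNeighbors hB hconn (by simpa using hreach)
  refine ⟨⟨hconn', fun w => ?_⟩, hconn', ?_, ?_, fun w hwu hwv => ?_⟩
  · rw [degree_congr hG']
    exact even_degree_moveNeighbors hB heven (hcard ▸ even_two) w
  · rw [degree_congr hG', degree_moveNeighbors_target hB, hcard]
  · rw [degree_congr hG', ← hcard]
    exact degree_moveNeighbors_source hB
  · rw [degree_congr hG']
    exact degree_moveNeighbors_of_ne hB hwu hwv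
end

section
/- Let n be an even positive integer and let i be an integer with 0 ≤ i ≤ n/2 − 1. Then every simple graph with n vertices and n(n−1)/2 − i edges contains a vertex of odd degree; in particular, no such graph is Eulerian. -/
open SimpleGraph Finset
open scoped Classical

theorem odd_degree_vertex_of_near_complete_even {V : Type*} [Fintype V]
    (n i : ℕ) (hn : 0 < n) (heven : Even n) (hi : i ≤ n / 2 - 1)
    (hV : Fintype.card V = n) (G : SimpleGraph V)
    (hm : G.edgeFinset.card = n * (n - 1) / 2 - i) :
    (∃ v : V, Odd (G.degree v)) ∧ ¬ IsEulerianGraph G := by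
  have key : ∃ v : V, Odd (G.degree v) := by
    by_contra h
    push_neg at h
    simp only [Nat.not_odd_iff_even] at h
    -- every degree of Gᶜ is odd
    have hdegc : ∀ v : V, Gᶜ.degree v = n - 1 - G.degree v := by
      intro v
      rw [SimpleGraph.degree_compl, hV]
    have hne : n ≥ 2 := by
      rcases heven with ⟨k, hk⟩
      omega
    have hdeglt : ∀ v : V, G.degree v ≤ n - 1 := by
      intro v
      have := G.degree_lt_card_verts v
      rw [hV] at this
      omega
    have hoddc : ∀ v : V, Odd (Gᶜ.degree v) := by
      intro v
      rw [hdegc v]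
      have h1 := h v
      have h2 := hdeglt v
      have hn1 : Odd (n - 1) := by
        rcases heven with ⟨k, hk⟩
        refine ⟨k - 1, by omega⟩
      rcases h1 with ⟨a, ha⟩
      rcases hn1 with ⟨b, hb⟩
      exact ⟨b - a, by omega⟩
    -- sum of degrees of Gᶜ
    have hsumG : ∑ v : V, G.degree v = 2 * (n * (n - 1) / 2 - i) := by
      rw [← hm]; exact G.sum_degrees_eq_twice_card_edges
    have hnn : 2 ∣ n * (n - 1) := heven.two_dvd.mul_right _
    have hile : 2 * i ≤ n * (n - 1) := by
      rcases heven with ⟨k, hk⟩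
      have : 2 * i ≤ n := by omega
      calc 2 * i ≤ n := this
        _ ≤ n * (n - 1) := Nat.le_mul_of_pos_right n (by omega)
    have hsumG' : ∑ v : V, G.degree v = n * (n - 1) - 2 * i := by
      rw [hsumG]
      omega
    have hdle : ∀ v : V, G.degree v ≤ n - 2 := by
      intro v
      have h1 : 1 ≤ Gᶜ.degree v := (hoddc v).pos
      rw [hdegc v] at h1
      omega
    have hsumle : ∑ v : V, G.degree v ≤ n * (n - 2) := by
      calc ∑ v : V, G.degree v ≤ ∑ _v : V, (n - 2) :=
            Finset.sum_le_sum fun v _ => hdle v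
        _ = n * (n - 2) := by
            rw [Finset.sum_const, Finset.card_univ, hV, smul_eq_mul]
    rw [hsumG'] at hsumle
    rcases heven with ⟨k, hk⟩
    have hexp : n * (n - 1) = n * (n - 2) + n := by
      rw [← Nat.mul_succ]
      congr 1
      omega
    omega
  refine ⟨key, ?_⟩
  rintro ⟨_, hall⟩
  obtain ⟨v, hv⟩ := key
  exact (Nat.not_even_iff_odd.mpr hv) (hall v)
end

section
/- Let n ≥ 4 be an even integer and let ℓ be an integer with 1 ≤ ℓ ≤ n/2 − 1. Let M be a matching of size ℓ in the complete graph K_{n−1} on n − 1 vertices. Let H be the graph obtained from K_{n−1} by removing the ℓ edges of M, adding one new vertex w, and joining w to all 2ℓ vertices covered by M. Then H is Eulerian, has n vertices, and has n(n−1)/2 − (n − 1 − ℓ) edges. -/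
/-!
Each vertex `v` of `K_{n-1}` covered by `M` loses its `M`-edge and gains the edge to the apex,
so every old vertex keeps degree `n - 2`, which is even; the apex has degree `|V(M)| = 2ℓ`.
The apex reaches the covered vertices directly and each uncovered vertex through any covered
one, since uncovered vertices keep all their edges. The handshake lemma then counts the edges.
-/

open SimpleGraph Finset
open scoped Classical

namespace SimpleGraph

variable {V : Type*}

def addApex (G : SimpleGraph V) (S : Set V) : SimpleGraph (Option V) where
  Adj
    | some a, some b => G.Adj a b
    | none, some x | some x, none => x ∈ S
    | none, none => False
  symm := ⟨by rintro (_ | a) (_ | b) h <;> simp_all [G.adj_comm]⟩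
  loopless := ⟨by rintro (_ | a) h <;> simp_all⟩

section addApex

variable (G : SimpleGraph V) (S : Set V)

@[simp]
lemma addApex_adj_some_some {a b : V} : (G.addApex S).Adj (some a) (some b) ↔ G.Adj a b :=
  Iff.rfl

@[simp]
lemma addApex_adj_none_some {x : V} : (G.addApex S).Adj none (some x) ↔ x ∈ S := Iff.rfl

@[simp]
lemma addApex_adj_some_none {x : V} : (G.addApex S).Adj (some x) none ↔ x ∈ S := Iff.rfl

theorem fromEdgeSet_image_map_some_union_eq_addApex :
    fromEdgeSet (Sym2.map some '' G.edgeSet ∪ {e | ∃ x ∈ S, e = s(none, some x)}) =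
      G.addApex S := by
  have map_some_ne (z : Sym2 V) (y : Option V) : Sym2.map some z ≠ s(none, y) := fun h ↦ by
    have hnone : none ∈ Sym2.map some z := h ▸ Sym2.mem_mk_left _ y
    simp [Sym2.mem_map] at hnone
  have map_some_inj : Function.Injective (Sym2.map (some : V → Option V)) :=
    Sym2.map.injective (Option.some_injective V)
  ext (_ | a) (_ | b)
  · simp
  · simp [map_some_ne]
  · simp [Sym2.eq_swap (a := some a), map_some_ne]
  · rw [fromEdgeSet_adj, ← Sym2.map_mk, Set.mem_union, map_some_inj.mem_set_image]
    simpa using G.ne_of_adj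

theorem connected_addApex (h : ∀ v, v ∈ S ∨ ∃ x ∈ S, G.Adj x v) :
    (G.addApex S).Connected := by
  refine (connected_iff_exists_forall_reachable _).2 ⟨none, ?_⟩
  rintro (_ | v)
  · rfl
  obtain hv | ⟨x, hx, hxv⟩ := h v
  · exact Adj.reachable hv
  · have hnone_x : (G.addApex S).Adj none (some x) := hx
    have hx_v : (G.addApex S).Adj (some x) (some v) := hxv
    exact hnone_x.reachable.trans hx_v.reachable

variable [Fintype V]

theorem degree_addApex_none : (G.addApex S).degree none = S.ncard := by
  rw [← card_neighborFinset_eq_degree, neighborFinset_eq_filter, card_filter, Fintype.sum_option]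
  simp [Set.ncard_eq_toFinset_card']

theorem degree_addApex_some (v : V) :
    (G.addApex S).degree (some v) = G.degree v + if v ∈ S then 1 else 0 := by
  rw [← card_neighborFinset_eq_degree, neighborFinset_eq_filter, card_filter, Fintype.sum_option,
    ← card_neighborFinset_eq_degree, neighborFinset_eq_filter, card_filter]
  simp only [addApex_adj_some_none, addApex_adj_some_some, add_comm]

end addApex

namespace Subgraph

variable {G : SimpleGraph V} {M : G.Subgraph}

theorem connected_addApex_compl_spanningCoe (h : M.verts.Nonempty) :
    (M.spanningCoeᶜ.addApex M.verts).Connected := by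
  obtain ⟨x, hx⟩ := h
  refine connected_addApex _ _ fun v ↦ or_iff_not_imp_left.2 fun hv ↦ ⟨x, hx, ?_⟩
  exact ⟨fun hxv ↦ hv (hxv ▸ hx), fun hxv ↦ hv (M.edge_vert hxv.symm)⟩

variable [Fintype V]

theorem IsMatching.degree_spanningCoe (hM : M.IsMatching) (v : V) :
    M.spanningCoe.degree v = if v ∈ M.verts then 1 else 0 := by
  by_cases hv : v ∈ M.verts
  · rw [if_pos hv, M.degree_spanningCoe]
    exact isMatching_iff_forall_degree.1 hM v hv
  · rw [if_neg hv, ← card_neighborFinset_eq_degree, card_eq_zero, eq_empty_iff_forall_notMem]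
    exact fun w hw ↦ hv (M.edge_vert ((mem_neighborFinset _ _ _).1 hw))

theorem IsMatching.ncard_verts (hM : M.IsMatching) : M.verts.ncard = 2 * M.edgeSet.ncard := by
  rw [← edgeSet_spanningCoe, ← coe_edgeFinset, Set.ncard_coe_finset,
    ← sum_degrees_eq_twice_card_edges]
  simp [hM.degree_spanningCoe, Set.ncard_eq_toFinset_card']

theorem IsMatching.degree_addApex_compl_spanningCoe_some (hM : M.IsMatching) (v : V) :
    (M.spanningCoeᶜ.addApex M.verts).degree (some v) = Fintype.card V - 1 := by
  have hlt := M.spanningCoe.degree_lt_card_verts v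
  rw [hM.degree_spanningCoe] at hlt
  rw [degree_addApex_some, degree_compl, hM.degree_spanningCoe]
  split_ifs at hlt ⊢ <;> omega

theorem IsMatching.isEulerianGraph_addApex_compl_spanningCoe (hM : M.IsMatching)
    (hV : Odd (Fintype.card V)) (hne : M.verts.Nonempty) :
    IsEulerianGraph (M.spanningCoeᶜ.addApex M.verts) := by
  refine ⟨connected_addApex_compl_spanningCoe hne, ?_⟩
  rintro (_ | v)
  · rw [degree_addApex_none, hM.ncard_verts]
    exact even_two_mul _
  · rw [hM.degree_addApex_compl_spanningCoe_some]
    exact Nat.Odd.sub_odd hV odd_one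

theorem IsMatching.card_edgeFinset_addApex_compl_spanningCoe (hM : M.IsMatching) :
    #(M.spanningCoeᶜ.addApex M.verts).edgeFinset =
      (Fintype.card V).choose 2 + M.edgeSet.ncard := by
  apply Nat.eq_of_mul_eq_mul_left two_pos
  rw [← sum_degrees_eq_twice_card_edges, Fintype.sum_option, degree_addApex_none, hM.ncard_verts]
  simp only [hM.degree_addApex_compl_spanningCoe_some, sum_const, card_univ, smul_eq_mul]
  rw [Nat.choose_two_right, mul_add, Nat.mul_div_cancel' (Nat.even_mul_pred_self _).two_dvd]
  ring

end Subgraph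

end SimpleGraph

theorem complete_minus_matching_plus_apex_eulerian_general (n ℓ : ℕ)
    (heven : Even n) (hℓ1 : 1 ≤ ℓ) (hℓ : ℓ ≤ n / 2 - 1)
    (M : (⊤ : SimpleGraph (Fin (n - 1))).Subgraph) (hM : M.IsMatching)
    (hMcard : M.edgeSet.ncard = ℓ) :
    -- `H` is obtained from `K_{n-1}` by removing the edges of `M`, adding a new vertex
    -- `w = none`, and joining `w` to all vertices covered by `M`
    (let H : SimpleGraph (Option (Fin (n - 1))) :=
      SimpleGraph.fromEdgeSet
        ((Sym2.map some '' ((⊤ : SimpleGraph (Fin (n - 1))).edgeSet \ M.edgeSet)) ∪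
          {e | ∃ x ∈ M.support, e = s((none : Option (Fin (n - 1))), some x)});
     IsEulerianGraph H ∧
     Fintype.card (Option (Fin (n - 1))) = n ∧
     H.edgeFinset.card = n * (n - 1) / 2 - (n - 1 - ℓ)) := by
  intro H
  have hH : H = M.spanningCoeᶜ.addApex M.verts := by
    rw [← hM.support_eq_verts, ← fromEdgeSet_image_map_some_union_eq_addApex, ← top_sdiff,
      edgeSet_sdiff, Subgraph.edgeSet_spanningCoe]
  have hodd : Odd (Fintype.card (Fin (n - 1))) := by
    rw [Fintype.card_fin]
    exact Nat.Even.sub_odd (by omega) heven odd_one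
  have hne : M.verts.Nonempty :=
    Set.nonempty_of_ncard_ne_zero (by rw [hM.ncard_verts]; omega)
  refine ⟨hH ▸ hM.isEulerianGraph_addApex_compl_spanningCoe hodd hne, by simp; omega, ?_⟩
  have hcard : #H.edgeFinset = (n - 1).choose 2 + ℓ := by
    convert hM.card_edgeFinset_addApex_compl_spanningCoe using 3 <;> simp [hMcard]
  obtain ⟨m, rfl⟩ : ∃ m, n = m + 1 := ⟨n - 1, by omega⟩
  have hpascal : (m + 1).choose 2 = m + m.choose 2 := by
    rw [Nat.choose_succ_succ, Nat.choose_one_right]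
  rw [Nat.choose_two_right] at hpascal
  simp only [Nat.add_sub_cancel] at hpascal hcard ⊢
  omega

theorem complete_minus_matching_plus_apex_eulerian (n ℓ : ℕ) (hn4 : 4 ≤ n)
    (heven : Even n) (hℓ1 : 1 ≤ ℓ) (hℓ : ℓ ≤ n / 2 - 1)
    (M : (⊤ : SimpleGraph (Fin (n - 1))).Subgraph) (hM : M.IsMatching)
    (hMcard : M.edgeSet.ncard = ℓ) :
    -- `H` is obtained from `K_{n-1}` by removing the edges of `M`, adding a new vertex
    -- `w = none`, and joining `w` to all vertices covered by `M`
    (let H : SimpleGraph (Option (Fin (n - 1))) :=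
      SimpleGraph.fromEdgeSet
        ((Sym2.map some '' ((⊤ : SimpleGraph (Fin (n - 1))).edgeSet \ M.edgeSet)) ∪
          {e | ∃ x ∈ M.support, e = s((none : Option (Fin (n - 1))), some x)});
     IsEulerianGraph H ∧
     Fintype.card (Option (Fin (n - 1))) = n ∧
     H.edgeFinset.card = n * (n - 1) / 2 - (n - 1 - ℓ)) :=
  complete_minus_matching_plus_apex_eulerian_general n ℓ heven hℓ1 hℓ M hM hMcard
end

section
/- Let n ≥ 6 be an even integer. Partition the vertex set of the complete graph K_n into two parts V and U of size n/2 each, let M be a perfect matching between V and U, and let C be (the edge set of) a cycle of length n/2 covering all vertices of V. Then the graph obtained from K_n by removing the edges of M and of C is Eulerian and has n(n−1)/2 − n edges. -/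
/-!
Let `H = M ⊔ C`, so that the graph in question is the complement `Hᶜ`. Matching edges cross the
partition while cycle edges stay inside `S`, so `M` and `C` are edge-disjoint and `H` has degree
`3` on `S` and `1` on `Sᶜ`. Since `n` is even, every degree `n - 1 - deg_H v` of `Hᶜ` is even, and
the handshake lemma gives `|E(H)| = n`. No edge of `H` lies inside `Sᶜ`, so `Sᶜ` is a clique of
`Hᶜ`, and a vertex of `S` is `Hᶜ`-adjacent to every vertex of `Sᶜ` but its matching partner;
as `|Sᶜ| ≥ 2`, this makes `Hᶜ` connected.
-/

open SimpleGraph Finset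
open scoped Classical

namespace SimpleGraph

variable {V : Type*}

theorem top_deleteEdges_edgeSet (H : SimpleGraph V) :
    (⊤ : SimpleGraph V).deleteEdges H.edgeSet = Hᶜ := by
  ext a b
  simp [compl_adj]

theorem connected_of_isClique_of_forall_exists_adj {G : SimpleGraph V} {T : Set V}
    (hT : G.IsClique T) (hne : T.Nonempty) (h : ∀ v ∉ T, ∃ u ∈ T, G.Adj v u) :
    G.Connected := by
  obtain ⟨t, ht⟩ := hne
  have hreach : ∀ u ∈ T, G.Reachable t u := fun u hu =>
    (eq_or_ne t u).elim (fun htu => htu ▸ Reachable.refl t) fun htu => (hT ht hu htu).reachable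
  refine (connected_iff_exists_forall_reachable G).mpr ⟨t, fun v => ?_⟩
  by_cases hv : v ∈ T
  · exact hreach v hv
  · obtain ⟨u, hu, hvu⟩ := h v hv
    exact (hreach u hu).trans hvu.symm.reachable

section Fintype

variable [Fintype V]

theorem degree_sup_of_disjoint {G₁ G₂ : SimpleGraph V} (h : Disjoint G₁ G₂) (v : V) :
    (G₁ ⊔ G₂).degree v = G₁.degree v + G₂.degree v := by
  simp only [← card_neighborFinset_eq_degree, neighborFinset_sup_of_disjoint (v := v) h,
    card_disjUnion]

theorem card_edgeFinset_compl (H : SimpleGraph V) [Fintype H.edgeSet] [Fintype Hᶜ.edgeSet] :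
    #Hᶜ.edgeFinset = (Fintype.card V).choose 2 - #H.edgeFinset := by
  have hunion : H.edgeFinset ∪ Hᶜ.edgeFinset = (⊤ : SimpleGraph V).edgeFinset := by
    ext e
    simp only [mem_union, mem_edgeFinset, ← Set.mem_union, ← edgeSet_sup, sup_compl_eq_top]
  rw [← card_edgeFinset_top_eq_card_choose_two, ← hunion,
    card_union_of_disjoint (by simpa using disjoint_compl_right)]
  omega

theorem Subgraph.IsPerfectMatching.degree_spanningCoe {G : SimpleGraph V} {M : G.Subgraph}
    (hM : M.IsPerfectMatching) (v : V) : M.spanningCoe.degree v = 1 := by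
  rw [Subgraph.degree_spanningCoe]
  exact isPerfectMatching_iff_forall_degree.mp hM v

theorem Walk.IsCycle.degree_spanningCoe_toSubgraph {G : SimpleGraph V} {u : V} {p : G.Walk u u}
    (hp : p.IsCycle) (v : V) :
    p.toSubgraph.spanningCoe.degree v = if v ∈ p.support then 2 else 0 := by
  rw [Subgraph.degree_spanningCoe, Subgraph.degree, ← Nat.card_eq_fintype_card,
    Nat.card_coe_set_eq]
  split_ifs with hv
  · exact hp.ncard_neighborSet_toSubgraph_eq_two hv
  · rw [Set.ncard_eq_zero]
    ext w
    simp only [Subgraph.mem_neighborSet, Set.mem_empty_iff_false, iff_false]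
    exact fun h => hv (Walk.mem_support_of_adj_toSubgraph h)

end Fintype

section MatchingCycle

variable {G : SimpleGraph V} {S : Finset V} {M : G.Subgraph} {x : V} {C : G.Walk x x}

theorem mem_of_adj_toSubgraph (hsupp : ∀ v, v ∈ C.support ↔ v ∈ S) {a b : V}
    (h : C.toSubgraph.Adj a b) : a ∈ S ∧ b ∈ S :=
  ⟨(hsupp a).mp (Walk.mem_support_of_adj_toSubgraph h),
    (hsupp b).mp (Walk.mem_support_of_adj_toSubgraph h.symm)⟩

theorem disjoint_matching_cycle (hMcross : ∀ a b : V, M.Adj a b → (a ∈ S ↔ b ∉ S))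
    (hsupp : ∀ v, v ∈ C.support ↔ v ∈ S) :
    Disjoint M.spanningCoe C.toSubgraph.spanningCoe := by
  refine disjoint_left.mpr fun a b hMab hCab => ?_
  obtain ⟨ha, hb⟩ := mem_of_adj_toSubgraph hsupp hCab
  exact (hMcross a b hMab).mp ha hb

variable [Fintype V]

theorem degree_matching_sup_cycle (hM : M.IsPerfectMatching)
    (hMcross : ∀ a b : V, M.Adj a b → (a ∈ S ↔ b ∉ S)) (hC : C.IsCycle)
    (hsupp : ∀ v, v ∈ C.support ↔ v ∈ S) (v : V) :
    (M.spanningCoe ⊔ C.toSubgraph.spanningCoe).degree v = 1 + if v ∈ S then 2 else 0 := by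
  rw [degree_sup_of_disjoint (disjoint_matching_cycle hMcross hsupp), hM.degree_spanningCoe,
    hC.degree_spanningCoe_toSubgraph]
  simp only [hsupp]

theorem two_mul_card_edgeFinset_matching_sup_cycle [DecidableEq V] (hM : M.IsPerfectMatching)
    (hMcross : ∀ a b : V, M.Adj a b → (a ∈ S ↔ b ∉ S)) (hC : C.IsCycle)
    (hsupp : ∀ v, v ∈ C.support ↔ v ∈ S) :
    2 * #(M.spanningCoe ⊔ C.toSubgraph.spanningCoe).edgeFinset = Fintype.card V + 2 * #S := by
  convert (sum_degrees_eq_twice_card_edges (M.spanningCoe ⊔ C.toSubgraph.spanningCoe)).symm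
  simp [degree_matching_sup_cycle hM hMcross hC hsupp, sum_add_distrib, sum_ite_mem, mul_comm]

theorem connected_compl_matching_sup_cycle (hM : M.IsPerfectMatching)
    (hMcross : ∀ a b : V, M.Adj a b → (a ∈ S ↔ b ∉ S)) (hsupp : ∀ v, v ∈ C.support ↔ v ∈ S)
    (hS : #S + 2 ≤ Fintype.card V) : (M.spanningCoe ⊔ C.toSubgraph.spanningCoe)ᶜ.Connected := by
  have hSc : 2 ≤ #Sᶜ := by rw [card_compl]; omega
  refine connected_of_isClique_of_forall_exists_adj (T := ↑Sᶜ) ?_ ?_ ?_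
  · intro a ha b hb hab
    simp only [coe_compl, Set.mem_compl_iff, mem_coe] at ha hb
    refine (compl_adj _ a b).mpr ⟨hab, ?_⟩
    rintro (hMab | hCab)
    · exact ha ((hMcross a b hMab).mpr hb)
    · exact ha (mem_of_adj_toSubgraph hsupp hCab).1
  · exact coe_nonempty.mpr (card_pos.mp (by omega))
  · intro v hv
    have hvS : v ∈ S := by simpa using hv
    obtain ⟨w, -, hw⟩ := Subgraph.isPerfectMatching_iff.mp hM v
    obtain ⟨u, hu, huw⟩ := exists_mem_ne hSc w
    have huS : u ∉ S := mem_compl.mp hu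
    refine ⟨u, mem_coe.mpr hu, (compl_adj _ v u).mpr ⟨?_, ?_⟩⟩
    · rintro rfl
      exact huS hvS
    · rintro (hvu | hvu)
      · exact huw (hw u hvu)
      · exact huS (mem_of_adj_toSubgraph hsupp hvu).2

end MatchingCycle

end SimpleGraph

theorem complete_minus_matching_minus_cycle_eulerian_general (n : ℕ) (hn6 : 6 ≤ n)
    (heven : Even n)
    -- `S` is one part of the partition (the part `V` of the statement); the other part is `Sᶜ`
    (S : Finset (Fin n)) (hS : S.card = n / 2)
    -- `M` is a perfect matching of `K_n` all of whose edges go between `S` and `Sᶜ`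
    (M : (⊤ : SimpleGraph (Fin n)).Subgraph) (hM : M.IsPerfectMatching)
    (hMcross : ∀ a b : Fin n, M.Adj a b → (a ∈ S ↔ b ∉ S))
    -- `C` is a cycle of length `n / 2` covering exactly the vertices of `S`
    (x : Fin n) (C : (⊤ : SimpleGraph (Fin n)).Walk x x)
    (hC : C.IsCycle)
    (hsupp : {v : Fin n | v ∈ C.support} = ↑S) :
    IsEulerianGraph
      ((⊤ : SimpleGraph (Fin n)).deleteEdges (M.edgeSet ∪ {e | e ∈ C.edges})) ∧
    ((⊤ : SimpleGraph (Fin n)).deleteEdges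
        (M.edgeSet ∪ {e | e ∈ C.edges})).edgeFinset.card = n * (n - 1) / 2 - n := by
  have hsupp' : ∀ v, v ∈ C.support ↔ v ∈ S := fun v => Set.ext_iff.mp hsupp v
  have hdel : (⊤ : SimpleGraph (Fin n)).deleteEdges (M.edgeSet ∪ {e | e ∈ C.edges}) =
      (M.spanningCoe ⊔ C.toSubgraph.spanningCoe)ᶜ := by
    rw [← top_deleteEdges_edgeSet, edgeSet_sup, Subgraph.edgeSet_spanningCoe,
      Subgraph.edgeSet_spanningCoe, Walk.edgeSet_toSubgraph, Walk.edgeSet]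
  -- `rw [hdel]` is blocked because the `Fintype` instance of `edgeFinset` depends on the graph
  suffices h : IsEulerianGraph (M.spanningCoe ⊔ C.toSubgraph.spanningCoe)ᶜ ∧
      #(M.spanningCoe ⊔ C.toSubgraph.spanningCoe)ᶜ.edgeFinset = n * (n - 1) / 2 - n by
    convert h using 4
  obtain ⟨m, rfl⟩ := heven
  have hSc : #S + 2 ≤ Fintype.card (Fin (m + m)) := by rw [Fintype.card_fin]; omega
  have hE := two_mul_card_edgeFinset_matching_sup_cycle hM hMcross hC hsupp'
  refine ⟨⟨connected_compl_matching_sup_cycle hM hMcross hsupp' hSc, fun v => ?_⟩, ?_⟩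
  · rw [degree_compl, degree_matching_sup_cycle hM hMcross hC hsupp', Fintype.card_fin]
    split_ifs
    · exact ⟨m - 2, by omega⟩
    · exact ⟨m - 1, by omega⟩
  · rw [Fintype.card_fin] at hE
    rw [card_edgeFinset_compl, Fintype.card_fin, Nat.choose_two_right]
    omega

theorem complete_minus_matching_minus_cycle_eulerian (n : ℕ) (hn6 : 6 ≤ n)
    (heven : Even n)
    -- `S` is one part of the partition (the part `V` of the statement); the other part is `Sᶜ`
    (S : Finset (Fin n)) (hS : S.card = n / 2)
    -- `M` is a perfect matching of `K_n` all of whose edges go between `S` and `Sᶜ`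
    (M : (⊤ : SimpleGraph (Fin n)).Subgraph) (hM : M.IsPerfectMatching)
    (hMcross : ∀ a b : Fin n, M.Adj a b → (a ∈ S ↔ b ∉ S))
    -- `C` is a cycle of length `n / 2` covering exactly the vertices of `S`
    (x : Fin n) (C : (⊤ : SimpleGraph (Fin n)).Walk x x)
    (hC : C.IsCycle) (hlen : C.length = n / 2)
    (hsupp : {v : Fin n | v ∈ C.support} = ↑S) :
    IsEulerianGraph
      ((⊤ : SimpleGraph (Fin n)).deleteEdges (M.edgeSet ∪ {e | e ∈ C.edges})) ∧
    ((⊤ : SimpleGraph (Fin n)).deleteEdges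
        (M.edgeSet ∪ {e | e ∈ C.edges})).edgeFinset.card = n * (n - 1) / 2 - n :=
  complete_minus_matching_minus_cycle_eulerian_general n hn6 heven S hS M hM hMcross x C hC hsupp
end
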